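/- arXiv:1704.07645 — 5 statements merged into one kernel-verified Lean document; each statement's English description precedes it below -/
import Mathlib

section
/- The function min{s₁,…,s_d} on [0,∞)^d is d-increasing: for any box B = [s₁,t₁]×⋯×[s_d,t_d] ⊂ [0,∞)^d with sᵢ ≤ tᵢ, the alternating sum over vertices Σ_v sign(v)·min{v₁,…,v_d} is nonnegative, where sign(v) = +1 if v_k = s_k for an even number of coordinates and −1 otherwise. -/
open Filter Set

open MeasureTheory in
/-- The function min{s₁,…,s_d} is d-increasing: the alternating vertex sum over
any box [s₁,t₁]×⋯×[s_d,t_d] ⊂ [0,∞)^d is nonnegative.  A vertex is encoded by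
`v : Fin (n+1) → Bool`, where `v k = false` means the k-th coordinate is `s k`,
and its sign is (−1)^{#{k : v k = false}}. -/
theorem min_is_d_increasing (n : ℕ) (s t : Fin (n+1) → ℝ)
    (h0 : ∀ k, 0 ≤ s k) (hst : ∀ k, s k ≤ t k) :
    0 ≤ ∑ v : Fin (n+1) → Bool,
        (-1 : ℝ) ^ ((Finset.univ.filter (fun k => v k = false)).card) *
          Finset.univ.inf' Finset.univ_nonempty (fun k => if v k then t k else s k) := by
  classical
  set c : (Fin (n+1) → Bool) → Fin (n+1) → ℝ :=
    fun v k => if v k then t k else s k with hc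
  set m : (Fin (n+1) → Bool) → ℝ :=
    fun v => Finset.univ.inf' Finset.univ_nonempty (c v) with hm
  have hc0 : ∀ v k, 0 ≤ c v k := by
    intro v k
    by_cases h : v k <;> simp [hc, h, h0 k, (h0 k).trans (hst k)]
  have hm0 : ∀ v, 0 ≤ m v := by
    intro v
    obtain ⟨k, -, hk⟩ := Finset.exists_mem_eq_inf' Finset.univ_nonempty (c v)
    rw [hm]; simp only; rw [hk]; exact hc0 v k
  -- indicator of (0, M)
  set ind : ℝ → ℝ → ℝ := fun M x => (Set.Ioo (0:ℝ) M).indicator (fun _ => (1:ℝ)) x with hind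
  have hindint : ∀ M : ℝ, Integrable (ind M) :=
    fun M => (integrableOn_const measure_Ioo_lt_top.ne).integrable_indicator
      measurableSet_Ioo
  have hval : ∀ M : ℝ, 0 ≤ M → ∫ x, ind M x = M := by
    intro M hM
    have : ind M = (Set.Ioo (0:ℝ) M).indicator 1 := rfl
    rw [this, integral_indicator_one measurableSet_Ioo, Real.volume_real_Ioo_of_le hM, sub_zero]
  -- the indicator of the min is the product of indicators
  have hprod : ∀ v x, ind (m v) x = ∏ k, ind (c v k) x := by
    intro v x
    have : ∀ M x, ind M x = if 0 < x ∧ x < M then (1:ℝ) else 0 := by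
      intro M x; simp [hind, Set.indicator_apply, Set.mem_Ioo]
    simp only [this, Finset.prod_boole]
    congr 1
    simp only [eq_iff_iff, Finset.mem_univ, forall_true_left]
    constructor
    · rintro ⟨hx, hxm⟩ k
      exact ⟨hx, (Finset.lt_inf'_iff _).mp hxm k (Finset.mem_univ k)⟩
    · intro h
      exact ⟨(h 0).1, (Finset.lt_inf'_iff _).mpr fun k _ => (h k).2⟩
  -- rewrite each summand as an integral
  have hsummand : ∀ v : Fin (n+1) → Bool,
      (-1 : ℝ) ^ ((Finset.univ.filter (fun k => v k = false)).card) * m v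
        = ∫ x, (-1 : ℝ) ^ ((Finset.univ.filter (fun k => v k = false)).card)
            * ∏ k, ind (c v k) x := by
    intro v
    rw [integral_const_mul]
    congr 1
    rw [← hval (m v) (hm0 v)]
    exact integral_congr_ae (Filter.Eventually.of_forall fun x => hprod v x)
  have hintprod : ∀ v : Fin (n+1) → Bool,
      Integrable (fun x => (-1 : ℝ) ^ ((Finset.univ.filter (fun k => v k = false)).card)
        * ∏ k, ind (c v k) x) := by
    intro v
    apply Integrable.const_mul
    have : (fun x => ∏ k, ind (c v k) x) = ind (m v) := by
      funext x; exact (hprod v x).symm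
    rw [this]; exact hindint _
  calc (0:ℝ)
      ≤ ∫ x, ∏ k, (ind (t k) x - ind (s k) x) := by
        apply integral_nonneg
        intro x
        apply Finset.prod_nonneg
        intro k _
        have hsub : Set.Ioo (0:ℝ) (s k) ⊆ Set.Ioo (0:ℝ) (t k) :=
          Set.Ioo_subset_Ioo_right (hst k)
        have := Set.indicator_le_indicator_of_subset hsub
          (f := fun _ : ℝ => (1:ℝ)) (fun a => zero_le_one) x
        simpa [hind, sub_nonneg] using this
    _ = ∫ x, ∑ v : Fin (n+1) → Bool,
          (-1 : ℝ) ^ ((Finset.univ.filter (fun k => v k = false)).card)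
            * ∏ k, ind (c v k) x := by
        apply integral_congr_ae
        apply Filter.Eventually.of_forall
        intro x
        have expand : ∀ k : Fin (n+1), ind (t k) x - ind (s k) x
            = ∑ j : Bool, (if j then ind (t k) x else -(ind (s k) x)) := by
          intro k; simp [Fintype.sum_bool]; ring
        calc ∏ k, (ind (t k) x - ind (s k) x)
            = ∏ k, ∑ j : Bool, (if j then ind (t k) x else -(ind (s k) x)) := by
              exact Finset.prod_congr rfl fun k _ => expand k
          _ = ∑ v ∈ Fintype.piFinset (fun _ : Fin (n+1) => (Finset.univ : Finset Bool)),
                ∏ k, (if v k then ind (t k) x else -(ind (s k) x)) :=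
              Finset.prod_univ_sum _ _
          _ = ∑ v : Fin (n+1) → Bool,
                (-1 : ℝ) ^ ((Finset.univ.filter (fun k => v k = false)).card)
                  * ∏ k, ind (c v k) x := by
              rw [Fintype.piFinset_univ]
              apply Finset.sum_congr rfl
              intro v _
              have step : ∀ k : Fin (n+1),
                  (if v k then ind (t k) x else -(ind (s k) x))
                    = (if v k = false then (-1:ℝ) else 1) * ind (c v k) x := by
                intro k
                by_cases h : v k <;> simp [hc, h]
              rw [Finset.prod_congr rfl fun k _ => step k, Finset.prod_mul_distrib]
              congr 1
              rw [Finset.prod_ite, Finset.prod_const, Finset.prod_const, one_pow, mul_one]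
    _ = ∑ v : Fin (n+1) → Bool,
          (-1 : ℝ) ^ ((Finset.univ.filter (fun k => v k = false)).card)
            * Finset.univ.inf' Finset.univ_nonempty (fun k => if v k then t k else s k) := by
        rw [integral_finset_sum _ (fun v _ => hintprod v)]
        exact Finset.sum_congr rfl fun v _ => (hsummand v).symm
end

section
/- For the d-dimensional Lévy intensity ρ_{d,A,σ}(s) = A(σ+1)(σ+2)⋯(σ+d−1)σ / (Γ(1−σ)(s₁+⋯+s_d)^{σ+d}) on (0,∞)^d with 0 < σ < 1 and A > 0, each one-dimensional marginal obtained by integrating out the other d−1 variables equals the σ-stable intensity A σ s^{−1−σ}/Γ(1−σ). -/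
open Filter Set MeasureTheory


lemma shiftInt (x : ℝ) (f : ℝ → ℝ) :
    ∫ a in Ioi (0:ℝ), f (x + a) = ∫ t in Ioi x, f t := by
  have hmp : MeasurePreserving (fun a : ℝ => x + a) volume volume :=
    measurePreserving_add_left volume x
  have hemb : MeasurableEmbedding (fun a : ℝ => x + a) :=
    (Homeomorph.addLeft x).measurableEmbedding
  have h := hmp.setIntegral_preimage_emb hemb f (Ioi x)
  rwa [preimage_const_add_Ioi, sub_self] at h

lemma shiftIntegrable (x : ℝ) (f : ℝ → ℝ) (h : IntegrableOn f (Ioi x)) :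
    IntegrableOn (fun a => f (x + a)) (Ioi (0:ℝ)) := by
  have hmp : MeasurePreserving (fun a : ℝ => x + a) volume volume :=
    measurePreserving_add_left volume x
  have hemb : MeasurableEmbedding (fun a : ℝ => x + a) :=
    (Homeomorph.addLeft x).measurableEmbedding
  have h2 := (hmp.integrableOn_comp_preimage hemb).2 h
  rwa [preimage_const_add_Ioi, sub_self] at h2

lemma measurableSet_pos (m : ℕ) : MeasurableSet {y : Fin m → ℝ | ∀ j, 0 < y j} := by
  have : {y : Fin m → ℝ | ∀ j, 0 < y j} = Set.pi univ fun _ => Ioi 0 := by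
    ext y; simp [Set.mem_pi]
  rw [this]; exact MeasurableSet.univ_pi fun _ => measurableSet_Ioi

set_option maxHeartbeats 1000000 in
lemma key (m : ℕ) : ∀ (σ : ℝ), 0 < σ → ∀ (x : ℝ), 0 < x →
    IntegrableOn (fun y : Fin m → ℝ => (x + ∑ j, y j) ^ (-(σ + m + 1)))
      {y | ∀ j, 0 < y j} ∧
    ∫ y in {y : Fin m → ℝ | ∀ j, 0 < y j}, (x + ∑ j, y j) ^ (-(σ + m + 1))
      = x ^ (-(σ + 1)) / ∏ k ∈ Finset.range m, (σ + (k + 1)) := by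
  induction m with
  | zero =>
    intro σ hσ x hx
    haveI : IsProbabilityMeasure (volume : Measure (Fin 0 → ℝ)) := by
      constructor
      rw [show (volume : Measure (Fin 0 → ℝ)) = Measure.pi fun _ => volume from rfl,
        Measure.pi_univ]
      simp
    have hU : {y : Fin 0 → ℝ | ∀ j, 0 < y j} = univ := by
      ext y; simp [Fin.forall_fin_zero_pi]
    constructor
    · rw [hU]; simp
    · rw [hU, Measure.restrict_univ]
      simp [integral_const]
  | succ m ih =>
    intro σ hσ x hx
    have hexp : -(σ + ((m+1:ℕ):ℝ) + 1) = -((σ+1) + (m:ℝ) + 1) := by push_cast; ring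
    set T := {y : Fin m → ℝ | ∀ j, 0 < y j} with hTdef
    have hT : MeasurableSet T := measurableSet_pos m
    set D : ℝ := ∏ k ∈ Finset.range m, ((σ+1) + ((k:ℝ) + 1)) with hDdef
    have hDpos : 0 < D := Finset.prod_pos fun k _ => by positivity
    set r : ℝ := -((σ+1) + (m:ℝ) + 1) with hrdef
    set F : ℝ × (Fin m → ℝ) → ℝ := fun p => (x + p.1 + ∑ j, p.2 j) ^ r with hFdef
    -- the equivalence
    set e := MeasurableEquiv.piFinSuccAbove (fun _ : Fin (m+1) => ℝ) 0 with he
    have hmp : MeasurePreserving e.symm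
        ((volume : Measure ℝ).prod (volume : Measure (Fin m → ℝ))) volume :=
      (measurePreserving_piFinSuccAbove (fun _ => (volume : Measure ℝ)) 0).symm e
    have hpre : e.symm ⁻¹' {y : Fin (m+1) → ℝ | ∀ j, 0 < y j} = Ioi (0:ℝ) ×ˢ T := by
      ext ⟨t, y⟩
      simp [he, hTdef, MeasurableEquiv.piFinSuccAbove, Fin.forall_iff_succAbove 0]
    have hcomp : ∀ p : ℝ × (Fin m → ℝ),
        (fun y : Fin (m+1) → ℝ => (x + ∑ j, y j) ^ r) (e.symm p) = F p := by
      rintro ⟨t, y⟩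
      simp only [he, hFdef, MeasurableEquiv.piFinSuccAbove, MeasurableEquiv.symm_mk,
        MeasurableEquiv.coe_mk, Equiv.symm_symm]
      show (x + ∑ j, ((Fin.insertNthEquiv (fun _ : Fin (m+1) => ℝ) 0) (t, y)) j) ^ r = _
      rw [show ∑ j, ((Fin.insertNthEquiv (fun _ : Fin (m+1) => ℝ) 0) (t, y)) j
          = t + ∑ j, y j by
        simp only [Fin.insertNthEquiv_apply]
        rw [Fin.sum_univ_succAbove _ 0]; simp, add_assoc]
    -- integrability of F on the product set
    have hFmeas : AEStronglyMeasurable F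
        (((volume : Measure ℝ).restrict (Ioi 0)).prod
          ((volume : Measure (Fin m → ℝ)).restrict T)) := by
      apply Measurable.aestronglyMeasurable
      fun_prop
    have hae : ∀ᵐ a ∂(volume : Measure ℝ).restrict (Ioi 0),
        Integrable (fun b => F (a, b)) ((volume : Measure (Fin m → ℝ)).restrict T) := by
      filter_upwards [ae_restrict_mem measurableSet_Ioi] with a ha
      have := (ih (σ+1) (by linarith) (x+a) (by exact add_pos hx ha)).1
      exact this
    have hinner : ∀ a : ℝ, a ∈ Ioi (0:ℝ) →
        ∫ b in T, F (a, b) = (x+a) ^ (-((σ+1) + 1)) / D := by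
      intro a ha
      have := (ih (σ+1) (by linarith) (x+a) (add_pos hx ha)).2
      exact this
    have hnormeq : ∀ a : ℝ, a ∈ Ioi (0:ℝ) →
        (∫ b in T, ‖F (a, b)‖) = (x+a) ^ (-((σ+1) + 1)) / D := by
      intro a ha
      rw [← hinner a ha]
      apply setIntegral_congr_fun hT
      intro b hb
      have hpos : 0 < x + a + ∑ j, b j := by
        have : 0 ≤ ∑ j, b j := Finset.sum_nonneg fun j _ => (hb j).le
        have := add_pos hx ha
        linarith
      exact Real.norm_of_nonneg (Real.rpow_nonneg hpos.le _)
    have hclosed : IntegrableOn (fun a : ℝ => (x+a) ^ (-((σ+1) + 1)) / D) (Ioi 0) := by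
      have : IntegrableOn (fun t : ℝ => t ^ (-((σ+1) + 1)) / D) (Ioi x) :=
        (integrableOn_Ioi_rpow_of_lt (by linarith) hx).div_const D
      exact shiftIntegrable x (fun t : ℝ => t ^ (-((σ+1) + 1)) / D) this
    have hFint : IntegrableOn F (Ioi (0:ℝ) ×ˢ T)
        ((volume : Measure ℝ).prod (volume : Measure (Fin m → ℝ))) := by
      rw [IntegrableOn, ← Measure.prod_restrict]
      refine (integrable_prod_iff hFmeas).2 ⟨hae, ?_⟩
      apply hclosed.congr
      filter_upwards [ae_restrict_mem measurableSet_Ioi] with a ha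
      exact (hnormeq a ha).symm
    constructor
    · simp only [hexp, ← hrdef]
      refine (hmp.integrableOn_comp_preimage e.symm.measurableEmbedding
        (f := fun y : Fin (m+1) → ℝ => (x + ∑ j, y j) ^ r)
        (s := {y : Fin (m+1) → ℝ | ∀ j, 0 < y j})).1 ?_
      have hcompfun : ((fun y : Fin (m+1) → ℝ => (x + ∑ j, y j) ^ r) ∘ e.symm) = F :=
        funext hcomp
      rw [hpre, hcompfun]
      exact hFint
    · simp only [hexp, ← hrdef]
      have htrans := hmp.setIntegral_preimage_emb e.symm.measurableEmbedding
        (fun y : Fin (m+1) → ℝ => (x + ∑ j, y j) ^ r) {y : Fin (m+1) → ℝ | ∀ j, 0 < y j}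
      rw [hpre] at htrans
      rw [← htrans]
      have hfun : (fun p : ℝ × (Fin m → ℝ) =>
          (fun y : Fin (m+1) → ℝ => (x + ∑ j, y j) ^ r) (e.symm p)) = F := funext hcomp
      rw [hfun]
      rw [setIntegral_prod F hFint]
      rw [setIntegral_congr_fun measurableSet_Ioi hinner]
      have : ∫ a in Ioi (0:ℝ), (x+a) ^ (-((σ+1) + 1)) / D
          = (∫ a in Ioi (0:ℝ), (x+a) ^ (-((σ+1) + 1))) / D := integral_div _ _
      rw [this, shiftInt x (fun t => t ^ (-((σ+1) + 1))),
        integral_Ioi_rpow_of_lt (by linarith) hx]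
      have hprod : ∏ k ∈ Finset.range (m+1), (σ + ((k:ℝ) + 1)) = (σ + 1) * D := by
        rw [Finset.prod_range_succ']
        have hc : ∀ k ∈ Finset.range m,
            (σ + (((k+1:ℕ):ℝ) + 1)) = ((σ+1) + ((k:ℝ) + 1)) := by
          intro k _; push_cast; ring
        rw [Finset.prod_congr rfl hc, hDdef]
        push_cast
        ring
      have h1 : -((σ+1) + 1) + 1 = -(σ + 1) := by ring
      rw [hprod, h1, div_div, show -(σ+1) * D = -((σ+1) * D) by ring, neg_div_neg_eq]

/-- Each one-dimensional marginal of the CoRM Lévy intensity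
ρ_{d,A,σ}(s) = A(σ+1)⋯(σ+d−1)σ/(Γ(1−σ)(s₁+⋯+s_d)^{σ+d}), obtained by integrating
out the other d−1 variables (the density depends only on the sum of the
coordinates, so fixing the value x of the remaining coordinate), equals the
σ-stable intensity Aσ x^{−1−σ}/Γ(1−σ). -/
theorem corm_marginal_is_stable (d : ℕ) (hd : 1 ≤ d) (A σ : ℝ)
    (hA : 0 < A) (hσ0 : 0 < σ) (hσ1 : σ < 1) (x : ℝ) (hx : 0 < x) :
    (∫ y in {y : Fin (d-1) → ℝ | ∀ j, 0 < y j},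
        A * (∏ k ∈ Finset.range (d-1), (σ + (k+1))) * σ /
          (Real.Gamma (1-σ) * (x + ∑ j, y j) ^ (σ + (d:ℝ))))
      = A * σ * x ^ (-1-σ) / Real.Gamma (1-σ) := by
  obtain ⟨m, rfl⟩ : ∃ m, d = m + 1 := ⟨d - 1, (Nat.succ_pred_eq_of_pos hd).symm⟩
  show (∫ y in {y : Fin m → ℝ | ∀ j, 0 < y j},
        A * (∏ k ∈ Finset.range m, (σ + ((k:ℝ)+1))) * σ /
          (Real.Gamma (1-σ) * (x + ∑ j, y j) ^ (σ + ((m+1:ℕ):ℝ))))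
      = A * σ * x ^ (-1-σ) / Real.Gamma (1-σ)
  set P := ∏ k ∈ Finset.range m, (σ + ((k:ℝ)+1)) with hP
  have hPpos : 0 < P := Finset.prod_pos fun k _ => by positivity
  have hΓ : 0 < Real.Gamma (1-σ) := Real.Gamma_pos_of_pos (by linarith)
  have hcongr : ∀ y ∈ {y : Fin m → ℝ | ∀ j, 0 < y j},
      A * P * σ / (Real.Gamma (1-σ) * (x + ∑ j, y j) ^ (σ + ((m+1:ℕ):ℝ)))
      = (A * P * σ / Real.Gamma (1-σ)) * (x + ∑ j, y j) ^ (-(σ + (m:ℝ) + 1)) := by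
    intro y hy
    have hpos : 0 < x + ∑ j, y j := by
      have : 0 ≤ ∑ j, y j := Finset.sum_nonneg fun j _ => (hy j).le
      linarith
    rw [show -(σ + (m:ℝ) + 1) = -(σ + ((m+1:ℕ):ℝ)) by push_cast; ring,
      Real.rpow_neg hpos.le]
    have hb : (x + ∑ j, y j) ^ (σ + ((m+1:ℕ):ℝ)) ≠ 0 := (Real.rpow_pos_of_pos hpos _).ne'
    field_simp
  rw [setIntegral_congr_fun (measurableSet_pos m) hcongr, integral_const_mul,
    (key m σ hσ0 x hx).2]
  rw [show (-1-σ : ℝ) = -(σ+1) by ring]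
  field_simp
  ring
end

section
/- Let ψ(λ) = ∫_{(0,∞)^d} (1 − e^{−⟨λ,s⟩}) ρ_{d,A,σ}(s) ds be the Laplace exponent of the Lévy intensity ρ_{d,A,σ}(s) = A(σ+1)⋯(σ+d−1)σ/(Γ(1−σ)(s₁+⋯+s_d)^{σ+d}). Then for λ = (λ₁,…,λ_d) with pairwise distinct positive entries, ψ(λ) = A · Σ_{i=1}^d λᵢ^{σ+d−1} / ∏_{j≠i}(λᵢ − λ_j). -/
set_option maxHeartbeats 1600000

open Filter Set MeasureTheory

section CormAux

open Real Polynomial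
open scoped ENNReal

lemma gamma_int' {a b : ℝ} (ha : 0 < a) (hb : 0 < b) :
    ∫ t in Ioi (0:ℝ), t ^ (a-1) * exp (-(b*t)) = (1/b)^a * Gamma a :=
  integral_rpow_mul_exp_neg_mul_Ioi ha hb

lemma gamma_integrable' {a b : ℝ} (ha : 0 < a) (hb : 0 < b) :
    IntegrableOn (fun t : ℝ => t ^ (a-1) * exp (-(b*t))) (Ioi 0) := by
  have := integrableOn_rpow_mul_exp_neg_mul_rpow (p := 1) (s := a-1) (b := b)
    (by linarith) one_pos hb
  refine this.congr_fun (fun x hx => ?_) measurableSet_Ioi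
  simp only [Real.rpow_one, neg_mul]

lemma gamma_lint' {a b : ℝ} (ha : 0 < a) (hb : 0 < b) :
    ∫⁻ t in Ioi (0:ℝ), ENNReal.ofReal (t ^ (a-1) * exp (-(b*t))) =
      ENNReal.ofReal ((1/b)^a * Gamma a) := by
  rw [← gamma_int' ha hb]
  refine (ofReal_integral_eq_lintegral_ofReal (gamma_integrable' ha hb) ?_).symm
  filter_upwards [ae_restrict_mem measurableSet_Ioi] with t ht
  have : (0:ℝ) < t := ht
  positivity

lemma exp_lint' {b : ℝ} (hb : 0 < b) :
    ∫⁻ u in Ioi (0:ℝ), ENNReal.ofReal (exp (-(b*u))) = ENNReal.ofReal b⁻¹ := by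
  have := gamma_lint' (a := 1) one_pos hb
  simpa using this

lemma exp_int' {b : ℝ} (hb : 0 < b) :
    ∫ u in Ioi (0:ℝ), exp (-(b*u)) = b⁻¹ := by
  have := gamma_int' (a := 1) one_pos hb
  simpa using this

lemma exp_integrable' {b : ℝ} (hb : 0 < b) :
    IntegrableOn (fun u : ℝ => exp (-(b*u))) (Ioi 0) := by
  have := gamma_integrable' (a := 1) one_pos hb
  simpa using this


lemma mellin_lint {σ lam : ℝ} (h0 : 0 < σ) (h1 : σ < 1) (hl : 0 < lam) :
    ∫⁻ t in Ioi (0:ℝ), ENNReal.ofReal (t ^ (σ-1) * (t+lam)⁻¹) =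
      ENNReal.ofReal (Gamma σ * Gamma (1-σ) * lam ^ (σ-1)) := by
  set G : ℝ → ℝ → ℝ≥0∞ := fun t u => ENNReal.ofReal (t ^ (σ-1) * exp (-((t+lam)*u))) with hG
  have hGm : Measurable (Function.uncurry G) := by
    fun_prop
  have swap : ∫⁻ t in Ioi (0:ℝ), ∫⁻ u in Ioi (0:ℝ), G t u =
      ∫⁻ u in Ioi (0:ℝ), ∫⁻ t in Ioi (0:ℝ), G t u :=
    lintegral_lintegral_swap hGm.aemeasurable
  have left : ∫⁻ t in Ioi (0:ℝ), ∫⁻ u in Ioi (0:ℝ), G t u =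
      ∫⁻ t in Ioi (0:ℝ), ENNReal.ofReal (t ^ (σ-1) * (t+lam)⁻¹) := by
    refine setLIntegral_congr_fun measurableSet_Ioi (fun t ht => ?_)
    have htl : (0:ℝ) < t + lam := by have : (0:ℝ) < t := ht; linarith
    have hnn : (0:ℝ) ≤ t ^ (σ-1) := by have : (0:ℝ) < t := ht; positivity
    calc ∫⁻ u in Ioi (0:ℝ), G t u
        = ∫⁻ u in Ioi (0:ℝ), ENNReal.ofReal (t ^ (σ-1)) * ENNReal.ofReal (exp (-((t+lam)*u))) := by
          refine setLIntegral_congr_fun measurableSet_Ioi (fun u hu => ?_)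
          rw [hG, ← ENNReal.ofReal_mul hnn]
      _ = ENNReal.ofReal (t ^ (σ-1)) * ∫⁻ u in Ioi (0:ℝ), ENNReal.ofReal (exp (-((t+lam)*u))) :=
          lintegral_const_mul _ (by fun_prop)
      _ = ENNReal.ofReal (t ^ (σ-1)) * ENNReal.ofReal (t+lam)⁻¹ := by rw [exp_lint' htl]
      _ = ENNReal.ofReal (t ^ (σ-1) * (t+lam)⁻¹) := by
          rw [← ENNReal.ofReal_mul hnn]
  have right : ∫⁻ u in Ioi (0:ℝ), ∫⁻ t in Ioi (0:ℝ), G t u =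
      ENNReal.ofReal (Gamma σ * Gamma (1-σ) * lam ^ (σ-1)) := by
    have step : ∀ u : ℝ, u ∈ Ioi (0:ℝ) → ∫⁻ t in Ioi (0:ℝ), G t u =
        ENNReal.ofReal (((1/u) ^ σ * Gamma σ) * exp (-(lam*u))) := by
      intro u hu
      have hu0 : (0:ℝ) < u := hu
      calc ∫⁻ t in Ioi (0:ℝ), G t u
          = ∫⁻ t in Ioi (0:ℝ), ENNReal.ofReal (t ^ (σ-1) * exp (-(u*t)))
              * ENNReal.ofReal (exp (-(lam*u))) := by
            refine setLIntegral_congr_fun measurableSet_Ioi (fun t ht => ?_)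
            have ht0 : (0:ℝ) < t := ht
            rw [hG, ← ENNReal.ofReal_mul (by positivity)]
            congr 1
            rw [mul_assoc, ← Real.exp_add]
            ring_nf
        _ = (∫⁻ t in Ioi (0:ℝ), ENNReal.ofReal (t ^ (σ-1) * exp (-(u*t))))
              * ENNReal.ofReal (exp (-(lam*u))) := by
            exact lintegral_mul_const _ (by fun_prop)
        _ = ENNReal.ofReal ((1/u) ^ σ * Gamma σ) * ENNReal.ofReal (exp (-(lam*u))) := by
            rw [gamma_lint' h0 hu0]
        _ = ENNReal.ofReal (((1/u) ^ σ * Gamma σ) * exp (-(lam*u))) := by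
            rw [← ENNReal.ofReal_mul (by positivity)]
    rw [setLIntegral_congr_fun measurableSet_Ioi step]
    calc ∫⁻ u in Ioi (0:ℝ), ENNReal.ofReal (((1/u) ^ σ * Gamma σ) * exp (-(lam*u)))
        = ∫⁻ u in Ioi (0:ℝ), ENNReal.ofReal (Gamma σ) *
            ENNReal.ofReal (u ^ ((1-σ)-1) * exp (-(lam*u))) := by
          refine setLIntegral_congr_fun measurableSet_Ioi (fun u hu => ?_)
          have hu0 : (0:ℝ) < u := hu
          rw [← ENNReal.ofReal_mul ((Gamma_pos_of_pos h0).le)]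
          congr 1
          rw [one_div, ← Real.rpow_neg_one u, ← Real.rpow_mul hu0.le,
            show (-1)*σ = 1-σ-1 by ring]
          ring
        _ = ENNReal.ofReal (Gamma σ) * ∫⁻ u in Ioi (0:ℝ),
              ENNReal.ofReal (u ^ ((1-σ)-1) * exp (-(lam*u))) :=
          lintegral_const_mul _ (by fun_prop)
        _ = ENNReal.ofReal (Gamma σ) * ENNReal.ofReal ((1/lam) ^ (1-σ) * Gamma (1-σ)) := by
          rw [gamma_lint' (by linarith) hl]
        _ = ENNReal.ofReal (Gamma σ * Gamma (1-σ) * lam ^ (σ-1)) := by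
          rw [← ENNReal.ofReal_mul ((Gamma_pos_of_pos h0).le)]
          congr 1
          rw [one_div, ← Real.rpow_neg_one lam, ← Real.rpow_mul hl.le]
          rw [show (-1) * (1-σ) = σ - 1 by ring]
          ring
  rw [← left, swap, right]


lemma mellin_nn {σ lam : ℝ} (hl : 0 < lam) :
    0 ≤ᵐ[volume.restrict (Ioi 0)] fun t : ℝ => t ^ (σ-1) * (t+lam)⁻¹ := by
  filter_upwards [ae_restrict_mem measurableSet_Ioi] with t ht
  have h1 : (0:ℝ) < t := ht
  have h2 : (0:ℝ) ≤ t ^ (σ-1) := Real.rpow_nonneg h1.le _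
  have h3 : (0:ℝ) < t + lam := by linarith
  exact mul_nonneg h2 (inv_nonneg.mpr h3.le)

lemma mellin_integrable' {σ lam : ℝ} (h0 : 0 < σ) (h1 : σ < 1) (hl : 0 < lam) :
    IntegrableOn (fun t : ℝ => t ^ (σ-1) * (t+lam)⁻¹) (Ioi 0) := by
  refine ⟨(by fun_prop : Measurable fun t : ℝ => t ^ (σ-1) * (t+lam)⁻¹).aestronglyMeasurable, ?_⟩
  rw [hasFiniteIntegral_iff_ofReal (mellin_nn hl), mellin_lint h0 h1 hl]
  exact ENNReal.ofReal_lt_top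

lemma mellin_int' {σ lam : ℝ} (h0 : 0 < σ) (h1 : σ < 1) (hl : 0 < lam) :
    ∫ t in Ioi (0:ℝ), t ^ (σ-1) * (t+lam)⁻¹ = Gamma σ * Gamma (1-σ) * lam ^ (σ-1) := by
  rw [integral_eq_lintegral_of_nonneg_ae (mellin_nn hl)
    ((by fun_prop : Measurable fun t : ℝ => t ^ (σ-1) * (t+lam)⁻¹).aestronglyMeasurable),
    mellin_lint h0 h1 hl, ENNReal.toReal_ofReal (le_of_lt (mul_pos
      (mul_pos (Gamma_pos_of_pos h0) (Gamma_pos_of_pos (by linarith)))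
      (Real.rpow_pos_of_pos hl _)))]


lemma pf_key (d : ℕ) (lam : Fin d → ℝ)
    (hdist : ∀ i j, i ≠ j → lam i ≠ lam j) (t : ℝ) :
    (∏ i, (t + lam i)) - t ^ d =
      ∑ i, (-(-lam i) ^ d * (∏ j ∈ Finset.univ.erase i, (lam j - lam i)⁻¹)) *
        ∏ j ∈ Finset.univ.erase i, (t + lam j) := by
  classical
  set v : Fin d → ℝ := fun i => -(lam i) with hv
  have hvinj : Set.InjOn v (Finset.univ : Finset (Fin d)) := by
    intro i _ j _ h
    by_contra hij
    exact hdist i j hij (neg_injective h)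
  set p : ℝ[X] := ∏ i, (X + C (lam i)) with hp
  have hpm : p.Monic := monic_prod_of_monic _ _ fun i _ => monic_X_add_C _
  have hpd : p.natDegree = d := by
    rw [hp, natDegree_prod _ _ fun i _ => (monic_X_add_C (lam i)).ne_zero]
    simp
  set f : ℝ[X] := p - X ^ d with hf
  have hdeg : f.degree < ((Finset.univ : Finset (Fin d)).card : ℕ) := by
    have h1 : p.degree = ((X : ℝ[X]) ^ d).degree := by
      rw [degree_X_pow, degree_eq_natDegree hpm.ne_zero, hpd]
    have h2 := degree_sub_lt h1 hpm.ne_zero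
      (by rw [hpm.leadingCoeff, leadingCoeff_X_pow])
    rw [degree_eq_natDegree hpm.ne_zero, hpd] at h2
    simpa using h2
  have hinterp : f = Lagrange.interpolate Finset.univ v fun i => f.eval (v i) :=
    Lagrange.eq_interpolate hvinj hdeg
  have heval : ∀ i, f.eval (v i) = -(-lam i) ^ d := by
    intro i
    have hp0 : p.eval (v i) = 0 := by
      rw [hp, eval_prod]
      exact Finset.prod_eq_zero (Finset.mem_univ i) (by simp [hv])
    rw [hf, eval_sub, hp0, eval_pow, eval_X, zero_sub, hv]
  have := congrArg (eval t) hinterp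
  rw [hf, eval_sub, hp, eval_prod, eval_pow, eval_X] at this
  simp only [eval_add, eval_X, eval_C] at this
  rw [this, Lagrange.interpolate_apply, eval_finset_sum]
  refine Finset.sum_congr rfl fun i _ => ?_
  rw [eval_mul, eval_C, heval i, Lagrange.basis, eval_prod]
  rw [show (∏ j ∈ Finset.univ.erase i, eval t (Lagrange.basisDivisor (v i) (v j)))
      = ∏ j ∈ Finset.univ.erase i, ((lam j - lam i)⁻¹ * (t + lam j)) from
    Finset.prod_congr rfl fun j _ => by
      rw [Lagrange.basisDivisor, eval_mul, eval_C, eval_sub, eval_X, eval_C]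
      show (v i - v j)⁻¹ * (t - v j) = _
      rw [hv, show -lam i - -lam j = lam j - lam i by ring, sub_neg_eq_add]]
  rw [Finset.prod_mul_distrib]
  ring


lemma sign_eq (d : ℕ) (hd : 1 ≤ d) (lam : Fin d → ℝ) (i : Fin d) :
    -(-lam i) ^ d * (∏ j ∈ Finset.univ.erase i, (lam j - lam i)⁻¹) =
      lam i ^ d / ∏ j ∈ Finset.univ.erase i, (lam i - lam j) := by
  obtain ⟨m, rfl⟩ : ∃ m, d = m + 1 := ⟨d-1, (Nat.succ_pred_eq_of_pos hd).symm⟩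
  have hcard : (Finset.univ.erase i).card = m := by
    rw [Finset.card_erase_of_mem (Finset.mem_univ i)]
    simp
  have h1 : ∏ j ∈ Finset.univ.erase i, (lam j - lam i)⁻¹ =
      (-1:ℝ)^m * ∏ j ∈ Finset.univ.erase i, (lam i - lam j)⁻¹ := by
    calc ∏ j ∈ Finset.univ.erase i, (lam j - lam i)⁻¹
        = ∏ j ∈ Finset.univ.erase i, ((-1) * (lam i - lam j)⁻¹) :=
          Finset.prod_congr rfl fun j _ => by
            rw [show lam j - lam i = -(lam i - lam j) by ring, ← neg_inv, neg_one_mul]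
      _ = (-1:ℝ)^((Finset.univ.erase i).card) * ∏ j ∈ Finset.univ.erase i, (lam i - lam j)⁻¹ := by
          rw [Finset.prod_mul_distrib, Finset.prod_const]
      _ = _ := by rw [hcard]
  rw [h1, div_eq_mul_inv, ← Finset.prod_inv_distrib, neg_pow]
  have hy : ((-1:ℝ)^m) * ((-1:ℝ)^m) = 1 := by
    rw [← pow_add]
    exact Even.neg_one_pow ⟨m, rfl⟩
  set P : ℝ := ∏ j ∈ Finset.univ.erase i, (lam i - lam j)⁻¹
  set L : ℝ := lam i ^ (m+1)
  calc -((-1:ℝ)^(m+1) * L) * ((-1)^m * P)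
      = ((-1:ℝ)^m * (-1)^m) * (((-1)*(-1)) * (L * P)) := by rw [pow_succ]; ring
    _ = L * P := by rw [hy]; ring

lemma integrand_eq (d : ℕ) (hd : 1 ≤ d) (σ : ℝ) (lam : Fin d → ℝ) (hpos : ∀ i, 0 < lam i)
    (hdist : ∀ i j, i ≠ j → lam i ≠ lam j) {t : ℝ} (ht : 0 < t) :
    t ^ (σ + (d:ℝ) - 1) * ((t⁻¹)^d - ∏ i, (t + lam i)⁻¹)
      = ∑ i, (lam i ^ d / ∏ j ∈ Finset.univ.erase i, (lam i - lam j)) *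
          (t ^ (σ-1) * (t + lam i)⁻¹) := by
  have hPd : ∀ i, (0:ℝ) < t + lam i := fun i => by have := hpos i; linarith
  have hPne : (∏ i, (t + lam i)) ≠ 0 :=
    Finset.prod_ne_zero_iff.mpr fun i _ => (hPd i).ne'
  have hrp : t ^ (σ + (d:ℝ) - 1) * (t⁻¹)^d = t ^ (σ-1) := by
    rw [show σ + (d:ℝ) - 1 = (σ-1) + (d:ℝ) by ring, Real.rpow_add ht, Real.rpow_natCast,
      inv_pow, mul_assoc, mul_inv_cancel₀ (pow_ne_zero _ ht.ne'), mul_one]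
  have h2 : (t⁻¹)^d - ∏ i, (t + lam i)⁻¹ =
      ((∏ i, (t + lam i)) - t^d) * ((t⁻¹)^d * (∏ i, (t + lam i))⁻¹) := by
    rw [Finset.prod_inv_distrib]
    field_simp
    rw [mul_sub, one_div, inv_pow, inv_mul_cancel₀ (pow_ne_zero _ ht.ne')]
  rw [h2, pf_key d lam hdist t, Finset.sum_mul, Finset.mul_sum]
  refine Finset.sum_congr rfl fun i _ => ?_
  rw [sign_eq d hd lam i]
  have hsplit : (∏ j, (t + lam j)) = (t + lam i) * ∏ j ∈ Finset.univ.erase i, (t + lam j) :=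
    (Finset.mul_prod_erase _ _ (Finset.mem_univ i)).symm
  have hene : (∏ j ∈ Finset.univ.erase i, (t + lam j)) ≠ 0 :=
    Finset.prod_ne_zero_iff.mpr fun j _ => (hPd j).ne'
  rw [hsplit, mul_inv, ← hrp]
  have hE : (∏ j ∈ Finset.univ.erase i, (t + lam j)) *
      (∏ j ∈ Finset.univ.erase i, (t + lam j))⁻¹ = 1 := mul_inv_cancel₀ hene
  linear_combination (lam i ^ d / (∏ j ∈ Finset.univ.erase i, (lam i - lam j)) *
    (t ^ (σ + (d:ℝ) - 1) * (t⁻¹)^d * (t + lam i)⁻¹)) * hE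


variable {d : ℕ}

lemma orthant_indicator (g : Fin d → ℝ → ℝ) (s : Fin d → ℝ) :
    (Set.pi univ fun _ => Ioi (0:ℝ)).indicator (fun s => ∏ i, g i (s i)) s =
      ∏ i, (Ioi (0:ℝ)).indicator (g i) (s i) := by
  by_cases hs : s ∈ Set.pi univ fun _ => Ioi (0:ℝ)
  · rw [indicator_of_mem hs]
    exact Finset.prod_congr rfl fun i _ =>
      (indicator_of_mem (hs i (Set.mem_univ i)) _).symm
  · rw [indicator_of_notMem hs]
    obtain ⟨i, hi⟩ : ∃ i, s i ∉ Ioi (0:ℝ) := by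
      simpa [Set.mem_pi] using hs
    exact (Finset.prod_eq_zero (Finset.mem_univ i) (indicator_of_notMem hi _)).symm

lemma orthant_integrable (g : Fin d → ℝ → ℝ) (hg : ∀ i, IntegrableOn (g i) (Ioi 0)) :
    IntegrableOn (fun s : Fin d → ℝ => ∏ i, g i (s i)) (Set.pi univ fun _ => Ioi 0) := by
  have hS : MeasurableSet (Set.pi univ fun _ : Fin d => Ioi (0:ℝ)) :=
    MeasurableSet.univ_pi fun i => measurableSet_Ioi
  rw [← integrable_indicator_iff hS]
  have : ∀ s : Fin d → ℝ, (Set.pi univ fun _ => Ioi (0:ℝ)).indicator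
      (fun s => ∏ i, g i (s i)) s = ∏ i, (Ioi (0:ℝ)).indicator (g i) (s i) :=
    orthant_indicator g
  rw [funext this]
  exact Integrable.fintype_prod fun i =>
    (integrable_indicator_iff measurableSet_Ioi).mpr (hg i)

lemma orthant_integral (g : Fin d → ℝ → ℝ) (hg : ∀ i, IntegrableOn (g i) (Ioi 0)) :
    ∫ s in Set.pi univ fun _ => Ioi (0:ℝ), ∏ i, g i (s i) = ∏ i, ∫ x in Ioi (0:ℝ), g i x := by
  have hS : MeasurableSet (Set.pi univ fun _ : Fin d => Ioi (0:ℝ)) :=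
    MeasurableSet.univ_pi fun i => measurableSet_Ioi
  rw [← integral_indicator hS, funext (orthant_indicator g), MeasureTheory.volume_pi,
    MeasureTheory.integral_fintype_prod_eq_prod (ι := Fin d)
      (fun i => (Ioi (0:ℝ)).indicator (g i))]
  exact Finset.prod_congr rfl fun i _ => integral_indicator measurableSet_Ioi

lemma s_integrand_eq (lam : Fin d → ℝ) (t : ℝ) (s : Fin d → ℝ) :
    (1 - exp (-∑ i, lam i * s i)) * exp (-(t * ∑ i, s i)) =
      (∏ i, exp (-(t * s i))) - ∏ i, exp (-((t + lam i) * s i)) := by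
  rw [sub_mul, one_mul]
  congr 1
  · rw [← Real.exp_sum]
    congr 1
    simp [Finset.mul_sum]
  · rw [← Real.exp_add, ← Real.exp_sum]
    congr 1
    rw [show (∑ i, -((t + lam i) * s i)) = ∑ i, (-(lam i * s i) + -(t * s i)) from
      Finset.sum_congr rfl fun i _ => by ring]
    rw [Finset.sum_add_distrib]
    simp [Finset.mul_sum]

lemma s_integral (hd : 1 ≤ d) (lam : Fin d → ℝ) (hpos : ∀ i, 0 < lam i) {t : ℝ} (ht : 0 < t) :
    IntegrableOn (fun s : Fin d → ℝ => (1 - exp (-∑ i, lam i * s i)) * exp (-(t * ∑ i, s i)))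
      (Set.pi univ fun _ => Ioi 0) ∧
    ∫ s in Set.pi univ fun _ => Ioi (0:ℝ),
        (1 - exp (-∑ i, lam i * s i)) * exp (-(t * ∑ i, s i)) =
      (t⁻¹)^d - ∏ i, (t + lam i)⁻¹ := by
  have h1 : ∀ i : Fin d, IntegrableOn (fun x : ℝ => exp (-(t * x))) (Ioi 0) :=
    fun i => exp_integrable' ht
  have h2 : ∀ i : Fin d, IntegrableOn (fun x : ℝ => exp (-((t + lam i) * x))) (Ioi 0) :=
    fun i => exp_integrable' (by have := hpos i; linarith)
  have heq := funext (s_integrand_eq lam t)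
  have hi1 := orthant_integrable (fun (_ : Fin d) (x : ℝ) => exp (-(t*x))) h1
  have hi2 := orthant_integrable (fun (i : Fin d) (x : ℝ) => exp (-((t + lam i)*x))) h2
  constructor
  · rw [heq]
    exact hi1.sub hi2
  · rw [heq]
    rw [integral_sub hi1 hi2]
    rw [orthant_integral _ h1, orthant_integral _ h2]
    congr 1
    · rw [Finset.prod_congr rfl fun (i : Fin d) _ => exp_int' ht, Finset.prod_const,
        Finset.card_univ, Fintype.card_fin]
    · exact Finset.prod_congr rfl fun i _ => exp_int' (by have := hpos i; linarith)


lemma gamma_prod (σ : ℝ) (hσ : 0 < σ) :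
    ∀ n : ℕ, Gamma (σ + n) = (∏ k ∈ Finset.range n, (σ + k)) * Gamma σ
  | 0 => by simp
  | (n+1) => by
      rw [show σ + ((n+1 : ℕ) : ℝ) = (σ + n) + 1 by push_cast; ring,
        Real.Gamma_add_one (by positivity), gamma_prod σ hσ n, Finset.prod_range_succ]
      ring


end CormAux

open Real in
/-- The Laplace exponent of the CoRM Lévy intensity
ρ_{d,A,σ}(s) = A(σ+1)⋯(σ+d−1)σ/(Γ(1−σ)(s₁+⋯+s_d)^{σ+d}) at a vector λ with
pairwise distinct positive entries equals A·Σᵢ λᵢ^{σ+d−1}/∏_{j≠i}(λᵢ−λⱼ). -/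
theorem corm_laplace_exponent (d : ℕ) (hd : 1 ≤ d) (A σ : ℝ)
    (hA : 0 < A) (hσ0 : 0 < σ) (hσ1 : σ < 1)
    (lam : Fin d → ℝ) (hpos : ∀ i, 0 < lam i)
    (hdist : ∀ i j, i ≠ j → lam i ≠ lam j) :
    (∫ s in {s : Fin d → ℝ | ∀ i, 0 < s i},
        (1 - Real.exp (-∑ i, lam i * s i)) *
          (A * (∏ k ∈ Finset.range (d-1), (σ + (k+1))) * σ /
            (Real.Gamma (1-σ) * (∑ i, s i) ^ (σ + (d:ℝ)))))
      = A * ∑ i, (lam i) ^ (σ + (d:ℝ) - 1) /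
            ∏ j ∈ Finset.univ.erase i, (lam i - lam j) := by
  classical
  haveI : NeZero d := ⟨Nat.one_le_iff_ne_zero.mp hd⟩
  set S : Set (Fin d → ℝ) := Set.pi univ fun _ => Ioi (0:ℝ) with hSdef
  have hS : MeasurableSet S := MeasurableSet.univ_pi fun i => measurableSet_Ioi
  have hset : {s : Fin d → ℝ | ∀ i, 0 < s i} = S := by
    ext s; simp [hSdef, Set.mem_pi]
  set a : ℝ := σ + (d:ℝ) with ha
  have ha0 : 0 < a := by positivity
  have hΓa : 0 < Gamma a := Gamma_pos_of_pos ha0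
  -- basic positivity facts on S
  have hsum_pos : ∀ s ∈ S, 0 < ∑ i, s i := by
    intro s hs
    exact Finset.sum_pos (fun i _ => hs i (Set.mem_univ i)) Finset.univ_nonempty
  have hone : ∀ s ∈ S, 0 ≤ 1 - exp (-∑ i, lam i * s i) := by
    intro s hs
    have hsum : 0 ≤ ∑ i, lam i * s i :=
      Finset.sum_nonneg fun i _ => mul_nonneg (hpos i).le (hs i (Set.mem_univ i)).le
    have : exp (-∑ i, lam i * s i) ≤ exp 0 := Real.exp_le_exp.mpr (by linarith)
    rw [Real.exp_zero] at this
    linarith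
  -- the kernel
  set G : (Fin d → ℝ) → ℝ → ENNReal := fun s t =>
    ENNReal.ofReal ((1 - exp (-∑ i, lam i * s i)) *
      (t ^ (a - 1) * exp (-(t * ∑ i, s i)))) with hG
  have hGm : Measurable (Function.uncurry G) := by
    rw [hG]; fun_prop
  -- coefficients and 1-D integrand
  set c : Fin d → ℝ := fun i => lam i ^ d / ∏ j ∈ Finset.univ.erase i, (lam i - lam j) with hc
  set ψ : ℝ → ℝ := fun t => ∑ i, c i * (t ^ (σ-1) * (t + lam i)⁻¹) with hψ
  have hψint : IntegrableOn ψ (Ioi 0) :=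
    integrable_finset_sum _ fun i _ => (mellin_integrable' hσ0 hσ1 (hpos i)).const_mul _
  have hψnn : ∀ t ∈ Ioi (0:ℝ), 0 ≤ ψ t := by
    intro t ht
    have ht0 : (0:ℝ) < t := ht
    simp only [hψ]
    rw [← integrand_eq d hd σ lam hpos hdist ht0]
    have hprod : (∏ i, (t + lam i)⁻¹) ≤ (t⁻¹)^d := by
      have : (∏ i, (t + lam i)⁻¹) ≤ ∏ i : Fin d, t⁻¹ := by
        refine Finset.prod_le_prod (fun i _ => by have := hpos i; positivity)
          (fun i _ => ?_)
        exact inv_anti₀ ht0 (by have := hpos i; linarith)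
      simpa [Finset.prod_const, Finset.card_univ] using this
    have : (0:ℝ) ≤ t ^ (σ + (d:ℝ) - 1) := rpow_nonneg ht0.le _
    nlinarith [sub_nonneg.mpr hprod]
  have hψval : ∫ t in Ioi (0:ℝ), ψ t =
      Gamma σ * Gamma (1-σ) * ∑ i, c i * lam i ^ (σ-1) := by
    rw [hψ, integral_finset_sum _ fun i _ =>
      ((mellin_integrable' hσ0 hσ1 (hpos i)).const_mul _)]
    rw [Finset.mul_sum]
    refine Finset.sum_congr rfl fun i _ => ?_
    rw [integral_const_mul, mellin_int' hσ0 hσ1 (hpos i)]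
    ring
  set V : ℝ := ∫ t in Ioi (0:ℝ), ψ t with hV
  have hV0 : 0 ≤ V := by
    rw [hV]
    refine setIntegral_nonneg measurableSet_Ioi hψnn
  -- Step A : t-integral at fixed s
  have stepA : ∀ s ∈ S, ∫⁻ t in Ioi (0:ℝ), G s t =
      ENNReal.ofReal (Gamma a) *
        ENNReal.ofReal ((1 - exp (-∑ i, lam i * s i)) * ((∑ i, s i) ^ a)⁻¹) := by
    intro s hs
    have hb := hsum_pos s hs
    have h1 := hone s hs
    calc ∫⁻ t in Ioi (0:ℝ), G s t
        = ∫⁻ t in Ioi (0:ℝ), ENNReal.ofReal (1 - exp (-∑ i, lam i * s i)) *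
            ENNReal.ofReal (t ^ (a-1) * exp (-((∑ i, s i) * t))) := by
          refine setLIntegral_congr_fun measurableSet_Ioi (fun t ht => ?_)
          simp only [hG]
          rw [← ENNReal.ofReal_mul h1, mul_comm t (∑ i, s i)]
      _ = ENNReal.ofReal (1 - exp (-∑ i, lam i * s i)) *
            ∫⁻ t in Ioi (0:ℝ), ENNReal.ofReal (t ^ (a-1) * exp (-((∑ i, s i) * t))) :=
          lintegral_const_mul _ (by fun_prop)
      _ = ENNReal.ofReal (1 - exp (-∑ i, lam i * s i)) *
            ENNReal.ofReal ((1/(∑ i, s i))^a * Gamma a) := by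
          rw [gamma_lint' ha0 hb]
      _ = ENNReal.ofReal (Gamma a) *
            ENNReal.ofReal ((1 - exp (-∑ i, lam i * s i)) * ((∑ i, s i) ^ a)⁻¹) := by
          rw [← ENNReal.ofReal_mul h1, ← ENNReal.ofReal_mul hΓa.le]
          congr 1
          rw [one_div, Real.inv_rpow hb.le]
          ring
  -- Step B : s-integral at fixed t
  have stepB : ∀ t ∈ Ioi (0:ℝ), ∫⁻ s in S, G s t =
      ENNReal.ofReal (t ^ (a-1) * ((t⁻¹)^d - ∏ i, (t + lam i)⁻¹)) := by
    intro t ht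
    have ht0 : (0:ℝ) < t := ht
    have htp : (0:ℝ) ≤ t ^ (a-1) := rpow_nonneg ht0.le _
    calc ∫⁻ s in S, G s t
        = ∫⁻ s in S, ENNReal.ofReal (t ^ (a-1)) *
            ENNReal.ofReal ((1 - exp (-∑ i, lam i * s i)) * exp (-(t * ∑ i, s i))) := by
          refine setLIntegral_congr_fun hS (fun s hs => ?_)
          simp only [hG]
          rw [← ENNReal.ofReal_mul htp]
          congr 1
          ring
      _ = ENNReal.ofReal (t ^ (a-1)) *
            ∫⁻ s in S, ENNReal.ofReal ((1 - exp (-∑ i, lam i * s i)) * exp (-(t * ∑ i, s i))) :=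
          lintegral_const_mul _ (by fun_prop)
      _ = ENNReal.ofReal (t ^ (a-1)) * ENNReal.ofReal ((t⁻¹)^d - ∏ i, (t + lam i)⁻¹) := by
          congr 1
          rw [← (s_integral hd lam hpos ht0).2]
          refine (ofReal_integral_eq_lintegral_ofReal (s_integral hd lam hpos ht0).1 ?_).symm
          filter_upwards [ae_restrict_mem hS] with s hs
          exact mul_nonneg (hone s hs) (exp_nonneg _)
      _ = ENNReal.ofReal (t ^ (a-1) * ((t⁻¹)^d - ∏ i, (t + lam i)⁻¹)) := by
          rw [← ENNReal.ofReal_mul htp]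
  -- Tonelli
  have swap : ∫⁻ s in S, ∫⁻ t in Ioi (0:ℝ), G s t = ∫⁻ t in Ioi (0:ℝ), ∫⁻ s in S, G s t :=
    lintegral_lintegral_swap hGm.aemeasurable
  -- right side value
  have hright : ∫⁻ t in Ioi (0:ℝ), ∫⁻ s in S, G s t = ENNReal.ofReal V := by
    rw [setLIntegral_congr_fun measurableSet_Ioi stepB]
    have : ∀ t ∈ Ioi (0:ℝ), ENNReal.ofReal (t ^ (a-1) * ((t⁻¹)^d - ∏ i, (t + lam i)⁻¹)) =
        ENNReal.ofReal (ψ t) := by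
      intro t ht
      simp only [hψ]
      rw [← integrand_eq d hd σ lam hpos hdist (show (0:ℝ) < t from ht), ← ha]
    rw [setLIntegral_congr_fun measurableSet_Ioi this, hV]
    refine (ofReal_integral_eq_lintegral_ofReal hψint ?_).symm
    filter_upwards [ae_restrict_mem measurableSet_Ioi] with t ht
    exact hψnn t ht
  -- left side
  set f0 : (Fin d → ℝ) → ℝ := fun s =>
    (1 - exp (-∑ i, lam i * s i)) * ((∑ i, s i) ^ a)⁻¹ with hf0
  have hf0m : Measurable f0 := by rw [hf0]; fun_prop
  set K : ENNReal := ∫⁻ s in S, ENNReal.ofReal (f0 s) with hK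
  have hleft : ∫⁻ s in S, ∫⁻ t in Ioi (0:ℝ), G s t = ENNReal.ofReal (Gamma a) * K := by
    rw [setLIntegral_congr_fun hS stepA, hK]
    exact lintegral_const_mul _ (by fun_prop)
  have hmain : ENNReal.ofReal (Gamma a) * K = ENNReal.ofReal V := by
    rw [← hleft, swap, hright]
  have hKval : K = ENNReal.ofReal (V / Gamma a) := by
    have hne : ENNReal.ofReal (Gamma a) ≠ 0 := by
      simp [ENNReal.ofReal_eq_zero, not_le, hΓa]
    have hnt : ENNReal.ofReal (Gamma a) ≠ ⊤ := ENNReal.ofReal_ne_top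
    rw [ENNReal.ofReal_div_of_pos hΓa]
    exact (ENNReal.eq_div_iff hne ENNReal.ofReal_ne_top).mpr hmain
  have hf0nn : 0 ≤ᵐ[volume.restrict S] f0 := by
    filter_upwards [ae_restrict_mem hS] with s hs
    have h1 := hone s hs
    have h2 : (0:ℝ) ≤ ((∑ i, s i) ^ a)⁻¹ := by
      have := hsum_pos s hs
      positivity
    exact mul_nonneg h1 h2
  have hf0int : IntegrableOn f0 S := by
    refine ⟨hf0m.aestronglyMeasurable, (hasFiniteIntegral_iff_ofReal hf0nn).mpr ?_⟩
    rw [← hK, hKval]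
    exact ENNReal.ofReal_lt_top
  have hf0val : ∫ s in S, f0 s = V / Gamma a := by
    rw [integral_eq_lintegral_of_nonneg_ae hf0nn hf0m.aestronglyMeasurable, ← hK, hKval,
      ENNReal.toReal_ofReal (by positivity)]
  -- final assembly
  rw [hset]
  have hcong : ∀ s ∈ S,
      (1 - exp (-∑ i, lam i * s i)) *
        (A * (∏ k ∈ Finset.range (d-1), (σ + (k+1))) * σ /
          (Gamma (1-σ) * (∑ i, s i) ^ a)) =
      (A * (∏ k ∈ Finset.range (d-1), (σ + (k+1))) * σ / Gamma (1-σ)) * f0 s := by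
    intro s hs
    rw [hf0, div_eq_mul_inv, div_eq_mul_inv, mul_inv]
    ring
  rw [setIntegral_congr_fun hS fun s hs => hcong s hs]
  rw [integral_const_mul, hf0val]
  set Q : ℝ := ∏ k ∈ Finset.range (d-1), (σ + (k+1)) with hQ
  have hQpos : 0 < Q := Finset.prod_pos fun k _ => by positivity
  have hΓaval : Gamma a = (σ * Q) * Gamma σ := by
    rw [ha, gamma_prod σ hσ0 d]
    congr 1
    obtain ⟨m, rfl⟩ : ∃ m, d = m + 1 := ⟨d-1, (Nat.succ_pred_eq_of_pos hd).symm⟩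
    rw [Finset.prod_range_succ', hQ]
    simp only [Nat.add_sub_cancel]
    push_cast
    ring
  have hVval : V = Gamma σ * Gamma (1-σ) *
      ∑ i, lam i ^ (a - 1) / ∏ j ∈ Finset.univ.erase i, (lam i - lam j) := by
    rw [hψval]
    congr 1
    refine Finset.sum_congr rfl fun i _ => ?_
    rw [hc, show a - 1 = (d:ℝ) + (σ-1) by rw [ha]; ring, Real.rpow_add (hpos i),
      Real.rpow_natCast]
    ring
  rw [hVval, hΓaval]
  have hΓσ := Gamma_pos_of_pos hσ0
  have hΓ1σ := Gamma_pos_of_pos (show (0:ℝ) < 1 - σ by linarith)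
  field_simp
end

section
/- Let μ₁,…,μ_d be the components of a homogeneous vector of completely random measures on (0,∞) with Laplace exponent ψ_t(λ) = γ(t)ψ(λ), where γ is nondecreasing with γ(0)=0, and let ψ_{i₁,…,i_h} denote the Laplace exponent of the marginal intensity in the coordinates i₁,…,i_h. If t_{i₁} ≤ t_{i₂} ≤ ⋯ ≤ t_{i_d} is the ordering of (t₁,…,t_d), then E[e^{−μ₁(0,t₁] − ⋯ − μ_d(0,t_d]}] = e^{−γ(t_{i₁})ψ(1)} · e^{−(γ(t_{i₂})−γ(t_{i₁}))ψ_{i₂,…,i_d}(1,…,1)} ⋯ e^{−(γ(t_{i_d})−γ(t_{i_{d−1}}))ψ_{i_d}(1)}. -/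
open Filter Set MeasureTheory

open Fin.NatCast in
/-- Proposition 2: for a homogeneous vector of CRMs (μ₁,…,μ_d) on ℝ⁺ with
Laplace exponent ψ_t(λ) = γ(t)ψ(λ) (encoded by the hypothesis `hlap` on the
increments) and independence of increments over disjoint intervals (`hindep`),
if π sorts the times t₁,…,t_d increasingly, then
E[e^{−Σᵢ μᵢ(0,tᵢ]}] = e^{−γ(t_{i₁})ψ(1)}·∏_{k≥2} e^{−(γ(t_{i_k})−γ(t_{i_{k−1}}))ψ_{i_k,…,i_d}(1)},
where ψ_{i_k,…,i_d}(1) = ψ applied to the indicator vector of {i_k,…,i_d}.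
Here `μ i t ω` stands for μᵢ(0,t](ω). -/
theorem multivariate_ntr_joint_survival {Ω : Type*} [MeasureSpace Ω]
    [IsProbabilityMeasure (volume : Measure Ω)]
    (n : ℕ) (μ : Fin (n+1) → ℝ → Ω → ℝ) (γ : ℝ → ℝ) (ψ : (Fin (n+1) → ℝ) → ℝ)
    (hγ0 : γ 0 = 0) (hγmono : Monotone γ)
    (hμ0 : ∀ i ω, μ i 0 ω = 0)
    (hlap : ∀ a b : ℝ, 0 ≤ a → a ≤ b → ∀ c : Fin (n+1) → ℝ, (∀ i, 0 ≤ c i) →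
      ∫ ω, Real.exp (-∑ i, c i * (μ i b ω - μ i a ω))
        = Real.exp (-(γ b - γ a) * ψ c))
    (hindep : ∀ (m : ℕ) (a : ℕ → ℝ), Monotone a → a 0 = 0 →
      ∀ c : ℕ → Fin (n+1) → ℝ, (∀ j i, 0 ≤ c j i) →
      ∫ ω, Real.exp (-∑ j ∈ Finset.range m, ∑ i, c j i * (μ i (a (j+1)) ω - μ i (a j) ω))
        = ∏ j ∈ Finset.range m,
            ∫ ω, Real.exp (-∑ i, c j i * (μ i (a (j+1)) ω - μ i (a j) ω)))
    (t : Fin (n+1) → ℝ) (ht : ∀ i, 0 ≤ t i)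
    (π : Equiv.Perm (Fin (n+1)))
    (hsort : ∀ k l : Fin (n+1), k ≤ l → t (π k) ≤ t (π l)) :
    ∫ ω, Real.exp (-∑ i, μ i (t i) ω)
      = ∏ k : Fin (n+1),
          Real.exp (-((γ (t (π k)) -
              (if h : k = 0 then 0 else γ (t (π (k.pred h))))) *
            ψ (fun i => if k ≤ π.symm i then 1 else 0))) := by
  classical
  set a : ℕ → ℝ := fun j => if j = 0 then 0 else
    t (π ⟨min (j-1) n, Nat.lt_succ_of_le (min_le_right _ _)⟩) with ha
  have ha0 : a 0 = 0 := by simp [ha]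
  have hamono : Monotone a := by
    apply monotone_nat_of_le_succ
    intro j
    rcases Nat.eq_zero_or_pos j with h | h
    · subst h; simpa [ha] using ht _
    · have hj : j ≠ 0 := h.ne'
      simp only [ha, if_neg hj, if_neg (Nat.succ_ne_zero j)]
      apply hsort
      simp only [Fin.mk_le_mk]
      omega
  set c : ℕ → Fin (n+1) → ℝ := fun j i => if j ≤ (π.symm i : ℕ) then 1 else 0 with hc
  have hcnn : ∀ j i, 0 ≤ c j i := by
    intro j i; simp only [hc]; split <;> norm_num
  have hsum : ∀ ω, ∑ i, μ i (t i) ω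
      = ∑ j ∈ Finset.range (n+1), ∑ i, c j i * (μ i (a (j+1)) ω - μ i (a j) ω) := by
    intro ω
    rw [Finset.sum_comm]
    apply Finset.sum_congr rfl
    intro i _
    have hm : (π.symm i : ℕ) ≤ n := Nat.lt_succ_iff.mp (π.symm i).isLt
    have h1 : ∀ j ∈ Finset.range (n+1),
        c j i * (μ i (a (j+1)) ω - μ i (a j) ω)
          = if j ∈ Finset.range ((π.symm i : ℕ)+1) then (μ i (a (j+1)) ω - μ i (a j) ω) else 0 := by
      intro j _
      simp only [hc, Finset.mem_range, Nat.lt_succ_iff]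
      split <;> simp
    rw [Finset.sum_congr rfl h1, Finset.sum_ite_mem]
    have h2 : Finset.range (n+1) ∩ Finset.range ((π.symm i : ℕ)+1)
        = Finset.range ((π.symm i : ℕ)+1) := by
      apply Finset.inter_eq_right.mpr
      apply Finset.range_subset_range.mpr; omega
    rw [h2, Finset.sum_range_sub (fun j => μ i (a j) ω)]
    have h3 : a ((π.symm i : ℕ)+1) = t i := by
      simp only [ha, if_neg (Nat.succ_ne_zero _), Nat.add_sub_cancel, min_eq_left hm]
      congr 1
      have : (⟨(π.symm i : ℕ), Nat.lt_succ_of_le hm⟩ : Fin (n+1)) = π.symm i := by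
        apply Fin.ext; rfl
      rw [this, Equiv.apply_symm_apply]
    rw [h3, ha0, hμ0]
    ring
  have key : (∫ ω, Real.exp (-∑ i, μ i (t i) ω))
      = ∏ j ∈ Finset.range (n+1), Real.exp (-(γ (a (j+1)) - γ (a j)) * ψ (c j)) := by
    have e1 : (∫ ω, Real.exp (-∑ i, μ i (t i) ω))
        = ∫ ω, Real.exp (-∑ j ∈ Finset.range (n+1), ∑ i, c j i * (μ i (a (j+1)) ω - μ i (a j) ω)) := by
      congr 1; funext ω; rw [hsum]
    rw [e1, hindep (n+1) a hamono ha0 c hcnn]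
    apply Finset.prod_congr rfl
    intro j _
    exact hlap (a j) (a (j+1)) (ha0 ▸ hamono (Nat.zero_le j)) (hamono (Nat.le_succ j)) (c j) (hcnn j)
  rw [key, ← Fin.prod_univ_eq_prod_range
    (fun j => Real.exp (-(γ (a (j+1)) - γ (a j)) * ψ (c j))) (n+1)]
  apply Finset.prod_congr rfl
  intro k _
  have hk : (k : ℕ) ≤ n := Nat.lt_succ_iff.mp k.isLt
  have hA : a ((k : ℕ)+1) = t (π k) := by
    simp only [ha, if_neg (Nat.succ_ne_zero _), Nat.add_sub_cancel, min_eq_left hk]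
  have hB : γ (a (k : ℕ)) = (if h : k = 0 then 0 else γ (t (π (k.pred h)))) := by
    by_cases h : k = 0
    · subst h; simp [ha0, hγ0]
    · have hk0 : (k : ℕ) ≠ 0 := by
        intro hc'; exact h (Fin.ext hc')
      rw [dif_neg h]
      have hidx : (⟨min ((k : ℕ)-1) n, Nat.lt_succ_of_le (min_le_right _ _)⟩ : Fin (n+1))
          = k.pred h := by
        apply Fin.ext
        simp only [Fin.val_natCast, Fin.coe_pred]
        rw [Nat.mod_eq_of_lt (by omega)]
        omega
      simp only [ha, if_neg hk0, hidx]
  have hC : c (k : ℕ) = (fun i => if k ≤ π.symm i then 1 else 0) := by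
    funext i
    simp only [hc, Fin.le_def]
  simp only [hA, hB, hC]
  ring_nf
end

section
/- (Multivariate NTR product representation) Let (μ₁,…,μ_d) be a vector of completely random measures on ℝ⁺ (with independence over disjoint sets), and define F(t₁,…,t_d) = ∏_{i=1}^d (1 − e^{−μᵢ(tᵢ)}). Given grids 0 = t_{i,0} < t_{i,1} < ⋯ < t_{i,h} for each coordinate i, set V_{i,j} = 1 − e^{−(μᵢ(t_{i,j}) − μᵢ(t_{i,j−1}))} and V̄_{i,j} = 1 − V_{i,j}. Then the random vectors (V_{1,j},…,V_{d,j}), j = 1,…,h, are mutually independent and (F(t⃗₁),…,F(t⃗_h)) = (∏ᵢ V_{i,1}, ∏ᵢ[1 − V̄_{i,1}V̄_{i,2}], …, ∏ᵢ[1 − ∏_{j=1}^h V̄_{i,j}]) where t⃗_j = (t_{1,j},…,t_{d,j}). -/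
open Filter Set MeasureTheory ProbabilityTheory

/-- Multivariate NTR product representation ('only if' direction of Proposition 3):
for a vector of CRMs (μ₁,…,μ_d) with independent increment vectors over the grid,
setting V_{i,j} = 1 − e^{−(μᵢ(t_{i,j})−μᵢ(t_{i,j−1}))}, the vectors
(V_{1,j},…,V_{d,j}), j = 1,…,h, are mutually independent and
F(t⃗_j) = ∏ᵢ(1 − e^{−μᵢ(t_{i,j})}) = ∏ᵢ(1 − ∏_{l≤j}(1 − V_{i,l})). -/
theorem ntr_representation_multivariate {Ω : Type*} [MeasureSpace Ω]
    [IsProbabilityMeasure (volume : Measure Ω)]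
    (d : ℕ) (hd : 1 ≤ d) (μ : Fin d → ℝ → Ω → ℝ)
    (hmono : ∀ i ω, Monotone fun u => μ i u ω)
    (h0 : ∀ i ω, μ i 0 ω = 0)
    (hmeas : ∀ i (u : ℝ), Measurable (μ i u))
    (h : ℕ) (t : Fin d → ℕ → ℝ) (ht0 : ∀ i, t i 0 = 0)
    (htmono : ∀ i, ∀ j < h, t i j < t i (j+1))
    (hindep : iIndepFun (m := fun _ : Fin h => (inferInstance : MeasurableSpace (Fin d → ℝ)))
      (fun j ω i => μ i (t i ((j : ℕ) + 1)) ω - μ i (t i (j : ℕ)) ω) volume) :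
    iIndepFun (m := fun _ : Fin h => (inferInstance : MeasurableSpace (Fin d → ℝ)))
        (fun j ω i => 1 - Real.exp (-(μ i (t i ((j : ℕ) + 1)) ω - μ i (t i (j : ℕ)) ω))) volume
      ∧ ∀ j : ℕ, j ≤ h → ∀ ω,
          ∏ i, (1 - Real.exp (-(μ i (t i j) ω)))
            = ∏ i, (1 - ∏ l ∈ Finset.range j,
                (1 - (1 - Real.exp (-(μ i (t i (l + 1)) ω - μ i (t i l) ω))))) := by
  constructor
  · have hg : Measurable fun x : Fin d → ℝ => fun i => 1 - Real.exp (-(x i)) := by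
      exact measurable_pi_lambda _ fun i =>
        (measurable_const.sub ((measurable_pi_apply i).neg.exp))
    exact hindep.comp (fun _ => fun x : Fin d → ℝ => fun i => 1 - Real.exp (-(x i)))
      (fun _ => hg)
  · intro j hj ω
    refine Finset.prod_congr rfl fun i _ => ?_
    congr 1
    have : ∀ l, (1 - (1 - Real.exp (-(μ i (t i (l + 1)) ω - μ i (t i l) ω))))
        = Real.exp (-(μ i (t i (l + 1)) ω - μ i (t i l) ω)) := fun l => by ring
    simp only [this]
    rw [← Real.exp_sum]
    congr 1
    have hsum : (∑ l ∈ Finset.range j, -(μ i (t i (l + 1)) ω - μ i (t i l) ω))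
        = -(μ i (t i j) ω - μ i (t i 0) ω) := by
      rw [Finset.sum_neg_distrib, Finset.sum_range_sub (fun l => μ i (t i l) ω)]
    rw [hsum, ht0 i, h0 i ω]
    ring
end
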